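/- Fix t ∈ [0,1). Let h be analytic on the unit disk D with h'(z) = (1−z)^{−3/2} (principal branch), let ω(z) = t + (1−t)z (an analytic self-map of D), and let g be analytic on D with g' = ω·h'. Then the harmonic mapping f = h + conj(g) satisfies (1−|z|²)·√(J_f(z)) ≤ 2√2·√(1+t) for all z ∈ D; in particular f ∈ B_H. -/

import Mathlib

open Metric Set Filter

/-- Jacobian of the harmonic mapping `f = h + conj g`. -/
noncomputable def jacobian (h g : ℂ → ℂ) (z : ℂ) : ℝ :=
  ‖deriv h z‖ ^ 2 - ‖deriv g z‖ ^ 2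

/-- The Bloch-type seminorm `β(f) = sup_{z ∈ 𝔻} (1 - |z|²) √|J_f(z)|`. -/
noncomputable def betaH (h g : ℂ → ℂ) : ℝ :=
  sSup ((fun z => (1 - ‖(z : ℂ)‖ ^ 2) * Real.sqrt |jacobian h g z|) '' Metric.ball 0 1)

/-- Membership in the Bloch-type class `B_H`, i.e. `β(f) < ∞`. -/
def InBH (h g : ℂ → ℂ) : Prop :=
  BddAbove ((fun z => (1 - ‖(z : ℂ)‖ ^ 2) * Real.sqrt |jacobian h g z|) '' Metric.ball 0 1)

/-! With `s = |1 - z|` one has `|h'(z)|² = s⁻³`, `J_f = s⁻³ (1 - |ω(z)|²)` and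
`1 - ω(z) = (1 - t)(1 - z)`. The elementary bound `1 - |w|² ≤ 2 |1 - w|`, applied to `w = z`
and to `w = ω(z)`, gives `(1 - |z|²)² J_f(z) ≤ (2s)² · 2(1 - t)s / s³ = 8(1 - t) ≤ 8(1 + t)`.
Since `|ω(z)| ≤ 1` by convexity of the disk, `J_f ≥ 0`, so the same bound controls `√|J_f|`. -/

theorem jacobian_eq_of_deriv_eq_mul {h g ω : ℂ → ℂ} {z : ℂ}
    (hgd : deriv g z = ω z * deriv h z) :
    jacobian h g z = ‖deriv h z‖ ^ 2 * (1 - ‖ω z‖ ^ 2) := by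
  rw [jacobian, hgd, norm_mul]
  ring

theorem jacobian_nonneg_of_deriv_eq_mul {h g ω : ℂ → ℂ} {z : ℂ}
    (hgd : deriv g z = ω z * deriv h z) (hω : ‖ω z‖ ≤ 1) : 0 ≤ jacobian h g z := by
  rw [jacobian_eq_of_deriv_eq_mul hgd]
  have : ‖ω z‖ ^ 2 ≤ 1 := pow_le_one₀ (norm_nonneg _) hω
  have : 0 ≤ 1 - ‖ω z‖ ^ 2 := by linarith
  positivity

theorem inBH_of_forall_le {h g : ℂ → ℂ} {C : ℝ}
    (hJ : ∀ z ∈ ball (0 : ℂ) 1, 0 ≤ jacobian h g z)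
    (hC : ∀ z ∈ ball (0 : ℂ) 1, (1 - ‖z‖ ^ 2) * Real.sqrt (jacobian h g z) ≤ C) :
    InBH h g := by
  refine ⟨C, ?_⟩
  rintro _ ⟨z, hz, rfl⟩
  simpa only [abs_of_nonneg (hJ z hz)] using hC z hz

theorem one_sub_norm_sq_le_two_mul_norm_one_sub (w : ℂ) : 1 - ‖w‖ ^ 2 ≤ 2 * ‖1 - w‖ := by
  have h := norm_sub_norm_le (1 : ℂ) w
  rw [norm_one] at h
  nlinarith [sq_nonneg (1 - ‖w‖)]

theorem norm_cpow_neg_three_halves_sq (w : ℂ) :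
    ‖w ^ (-(3 / 2) : ℂ)‖ ^ 2 = (‖w‖ ^ 3)⁻¹ := by
  have hexp : (-(3 / 2) : ℂ) = ((-(3 / 2) : ℝ) : ℂ) := by push_cast; ring
  rw [hexp, Complex.norm_cpow_real, ← Real.rpow_natCast, ← Real.rpow_mul (norm_nonneg w),
    ← Real.rpow_natCast, ← Real.rpow_neg (norm_nonneg w)]
  norm_num

section AffineSelfMap

variable {t : ℝ} {z : ℂ}

theorem norm_affine_le_one (ht : t ∈ Icc (0 : ℝ) 1) (hz : ‖z‖ ≤ 1) :
    ‖(t : ℂ) + (1 - t) * z‖ ≤ 1 := by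
  have hmem := convex_closedBall (0 : ℂ) 1 (mem_closedBall_zero_iff.2 (norm_one (α := ℂ)).le)
    (mem_closedBall_zero_iff.2 hz) ht.1 (sub_nonneg.2 ht.2) (add_sub_cancel t 1)
  simpa [Complex.real_smul] using hmem

theorem one_sub_norm_affine_sq_le (ht : t ≤ 1) :
    1 - ‖(t : ℂ) + (1 - t) * z‖ ^ 2 ≤ 2 * (1 - t) * ‖1 - z‖ := by
  have hfactor : 1 - ((t : ℂ) + (1 - t) * z) = ((1 - t : ℝ) : ℂ) * (1 - z) := by
    push_cast; ring
  have h := one_sub_norm_sq_le_two_mul_norm_one_sub ((t : ℂ) + (1 - t) * z)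
  rwa [hfactor, norm_mul, Complex.norm_real, Real.norm_of_nonneg (sub_nonneg.2 ht),
    ← mul_assoc] at h

end AffineSelfMap

section ExtremalExample

variable {t : ℝ} {h g : ℂ → ℂ} {z : ℂ}

theorem jacobian_extremal_eq
    (hd : deriv h z = (1 - z) ^ (-(3 / 2) : ℂ))
    (hgd : deriv g z = ((t : ℂ) + (1 - t) * z) * deriv h z) :
    jacobian h g z = (‖1 - z‖ ^ 3)⁻¹ * (1 - ‖(t : ℂ) + (1 - t) * z‖ ^ 2) := by
  rw [jacobian_eq_of_deriv_eq_mul (ω := fun z => (t : ℂ) + (1 - t) * z) hgd, hd,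
    norm_cpow_neg_three_halves_sq]

theorem sq_one_sub_norm_sq_mul_jacobian_extremal_le (ht : t ∈ Icc (0 : ℝ) 1) (hz : ‖z‖ < 1)
    (hd : deriv h z = (1 - z) ^ (-(3 / 2) : ℂ))
    (hgd : deriv g z = ((t : ℂ) + (1 - t) * z) * deriv h z) :
    (1 - ‖z‖ ^ 2) ^ 2 * jacobian h g z ≤ 8 * (1 - t) := by
  set s := ‖1 - z‖
  have hs : 0 < s := norm_pos_iff.2 (sub_ne_zero.2 (by rintro rfl; simp at hz))
  have hz_nonneg : 0 ≤ 1 - ‖z‖ ^ 2 := by nlinarith [norm_nonneg z]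
  have hω_nonneg : 0 ≤ 1 - ‖(t : ℂ) + (1 - t) * z‖ ^ 2 := by
    nlinarith [norm_nonneg ((t : ℂ) + (1 - t) * z), norm_affine_le_one ht hz.le]
  have hz_bound := one_sub_norm_sq_le_two_mul_norm_one_sub z
  have hω_bound := one_sub_norm_affine_sq_le (z := z) ht.2
  rw [jacobian_extremal_eq hd hgd, ← mul_assoc, mul_comm _ (s ^ 3)⁻¹, mul_assoc,
    inv_mul_le_iff₀ (by positivity)]
  calc (1 - ‖z‖ ^ 2) ^ 2 * (1 - ‖(t : ℂ) + (1 - t) * z‖ ^ 2)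
      ≤ (2 * s) ^ 2 * (2 * (1 - t) * s) := by gcongr
    _ = s ^ 3 * (8 * (1 - t)) := by ring

end ExtremalExample

theorem extremal_example_in_BH_general (t : ℝ) (ht : t ∈ Set.Ico (0 : ℝ) 1) (h g ω : ℂ → ℂ)
    (hω : ω = fun z => (t : ℂ) + (1 - (t : ℂ)) * z)
    (hd : ∀ z ∈ Metric.ball (0 : ℂ) 1, deriv h z = (1 - z) ^ (-(3 / 2) : ℂ))
    (hgd : ∀ z ∈ Metric.ball (0 : ℂ) 1, deriv g z = ω z * deriv h z) :
    (∀ z ∈ Metric.ball (0 : ℂ) 1,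
        (1 - ‖z‖ ^ 2) * Real.sqrt (jacobian h g z)
          ≤ 2 * Real.sqrt 2 * Real.sqrt (1 + t))
    ∧ InBH h g := by
  obtain ⟨ht0, ht1⟩ := ht
  have ht' : t ∈ Icc (0 : ℝ) 1 := ⟨ht0, ht1.le⟩
  subst hω
  have hJ : ∀ z ∈ ball (0 : ℂ) 1, 0 ≤ jacobian h g z := fun z hz =>
    jacobian_nonneg_of_deriv_eq_mul (ω := fun z => (t : ℂ) + (1 - t) * z) (hgd z hz)
      (norm_affine_le_one ht' (mem_ball_zero_iff.1 hz).le)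
  have hbound : ∀ z ∈ ball (0 : ℂ) 1,
      (1 - ‖z‖ ^ 2) * Real.sqrt (jacobian h g z) ≤ 2 * Real.sqrt 2 * Real.sqrt (1 + t) := by
    intro z hz
    have hz1 := mem_ball_zero_iff.1 hz
    have hsharp :=
      sq_one_sub_norm_sq_mul_jacobian_extremal_le ht' hz1 (hd z hz) (hgd z hz)
    calc (1 - ‖z‖ ^ 2) * Real.sqrt (jacobian h g z)
        = Real.sqrt ((1 - ‖z‖ ^ 2) ^ 2 * jacobian h g z) := by
          rw [Real.sqrt_mul (sq_nonneg _), Real.sqrt_sq (by nlinarith [norm_nonneg z])]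
      _ ≤ Real.sqrt (2 ^ 2 * 2 * (1 + t)) := Real.sqrt_le_sqrt (by linarith)
      _ = 2 * Real.sqrt 2 * Real.sqrt (1 + t) := by
          rw [Real.sqrt_mul (by positivity), Real.sqrt_mul (by positivity),
            Real.sqrt_sq zero_le_two]
  exact ⟨hbound, inBH_of_forall_le hJ hbound⟩

/-- **The extremal example.**  For `t ∈ [0,1)`, `h'(z) = (1-z)^{-3/2}`,
`ω(z) = t + (1-t)z` and `g' = ω·h'`, the harmonic mapping `f = h + conj g` satisfies
`(1-|z|²)√(J_f(z)) ≤ 2√2·√(1+t)` on the disk; in particular `f ∈ B_H`. -/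
theorem extremal_example_in_BH (t : ℝ) (ht : t ∈ Set.Ico (0 : ℝ) 1) (h g ω : ℂ → ℂ)
    (hω : ω = fun z => (t : ℂ) + (1 - (t : ℂ)) * z)
    (hh : DifferentiableOn ℂ h (Metric.ball 0 1))
    (hd : ∀ z ∈ Metric.ball (0 : ℂ) 1, deriv h z = (1 - z) ^ (-(3 / 2) : ℂ))
    (hg : DifferentiableOn ℂ g (Metric.ball 0 1))
    (hgd : ∀ z ∈ Metric.ball (0 : ℂ) 1, deriv g z = ω z * deriv h z) :
    (∀ z ∈ Metric.ball (0 : ℂ) 1,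
        (1 - ‖z‖ ^ 2) * Real.sqrt (jacobian h g z)
          ≤ 2 * Real.sqrt 2 * Real.sqrt (1 + t))
    ∧ InBH h g :=
  extremal_example_in_BH_general t ht h g ω hω hd hgd
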